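/- arXiv:1508.00792 — 6 statements merged into one kernel-verified Lean document; each statement's English description precedes it below -/
import Mathlib

section
/- Let L be an N×N Hermitian positive definite complex matrix. Then the matrix L⁻¹ + Δ(L) is Hermitian positive definite, where Δ(L) = (1/n)∑_{i=1}^n Uᵢ(Uᵢ*LUᵢ)⁻¹Uᵢ* − (I+L)⁻¹. (Inductive step of Proposition 1.) -/
open Matrix
open scoped ComplexOrder

/-- Δ(L) = (1/n)∑ᵢ Uᵢ(Uᵢ*LUᵢ)⁻¹Uᵢ* − (I+L)⁻¹. -/
noncomputable def Delta {N n : ℕ} {k : Fin n → ℕ}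
    (U : (i : Fin n) → Matrix (Fin N) (Fin (k i)) ℂ)
    (L : Matrix (Fin N) (Fin N) ℂ) : Matrix (Fin N) (Fin N) ℂ :=
  (n : ℂ)⁻¹ • (∑ i, U i * ((U i)ᴴ * L * U i)⁻¹ * (U i)ᴴ) - (1 + L)⁻¹

/-!
Split `L⁻¹ + Δ(L)` as `(1/n) ∑ᵢ Uᵢ(Uᵢ*LUᵢ)⁻¹Uᵢ* + (L⁻¹ − (I+L)⁻¹)`. Each compression `Uᵢ*LUᵢ`
is positive definite because `Uᵢ` is injective, so the first summand is positive semidefinite.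
The second is `(L(I+L))⁻¹ = (L + L²)⁻¹`, the inverse of a positive definite matrix.
-/

namespace Matrix

variable {m n R 𝕜 : Type*} [Fintype m] [Fintype n] [DecidableEq m]

lemma mulVec_injective_of_conjTranspose_mul_self_eq_one [CommSemiring R] [StarRing R]
    {B : Matrix n m R} (hB : Bᴴ * B = 1) : Function.Injective B.mulVec :=
  Function.LeftInverse.injective (g := (Bᴴ *ᵥ ·)) fun x => by simp [mulVec_mulVec, hB]

lemma PosDef.conjTranspose_mul_mul_of_conjTranspose_mul_self_eq_one [RCLike 𝕜]
    {A : Matrix n n 𝕜} (hA : A.PosDef) {B : Matrix n m 𝕜} (hB : Bᴴ * B = 1) :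
    (Bᴴ * A * B).PosDef :=
  hA.conjTranspose_mul_mul_same (mulVec_injective_of_conjTranspose_mul_self_eq_one hB)

variable [DecidableEq n]

lemma inv_sub_inv_one_add [CommRing R] {A : Matrix n n R} (hA : IsUnit A.det)
    (hA₁ : IsUnit (1 + A).det) : A⁻¹ - (1 + A)⁻¹ = (A + A * A)⁻¹ := by
  have hAA₁ : A + A * A = A * (1 + A) := by noncomm_ring
  calc A⁻¹ - (1 + A)⁻¹
      = (1 + A)⁻¹ * ((1 + A) * A⁻¹) - (1 + A)⁻¹ * (A * A⁻¹) := by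
        rw [mul_nonsing_inv _ hA, ← Matrix.mul_assoc, nonsing_inv_mul _ hA₁, Matrix.one_mul,
          Matrix.mul_one]
    _ = (1 + A)⁻¹ * A⁻¹ := by noncomm_ring
    _ = (A + A * A)⁻¹ := by rw [hAA₁, mul_inv_rev]

lemma PosDef.inv_sub_inv_one_add [RCLike 𝕜] {A : Matrix n n 𝕜} (hA : A.PosDef) :
    (A⁻¹ - (1 + A)⁻¹).PosDef := by
  have hA₁ : (1 + A).PosDef := PosDef.one.add_posSemidef hA.posSemidef
  have hAA : (A * A).PosSemidef := by
    simpa [hA.isHermitian.eq] using PosSemidef.one.conjTranspose_mul_mul_same (m := n) A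
  rw [Matrix.inv_sub_inv_one_add hA.det_pos.ne'.isUnit hA₁.det_pos.ne'.isUnit]
  exact (hA.add_posSemidef hAA).inv

end Matrix

theorem inv_add_delta_posDef_general {N n : ℕ} {k : Fin n → ℕ}
    (U : (i : Fin n) → Matrix (Fin N) (Fin (k i)) ℂ)
    (hU : ∀ i, (U i)ᴴ * U i = 1)
    (L : Matrix (Fin N) (Fin N) ℂ) (hL : L.PosDef) :
    (L⁻¹ + Delta U L).PosDef := by
  have hsum : (∑ i, U i * ((U i)ᴴ * L * U i)⁻¹ * (U i)ᴴ).PosSemidef :=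
    posSemidef_sum _ fun i _ =>
      (hL.conjTranspose_mul_mul_of_conjTranspose_mul_self_eq_one (hU i)).inv.posSemidef
        |>.mul_mul_conjTranspose_same (U i)
  have hsplit : L⁻¹ + Delta U L =
      (n : ℂ)⁻¹ • (∑ i, U i * ((U i)ᴴ * L * U i)⁻¹ * (U i)ᴴ) + (L⁻¹ - (1 + L)⁻¹) := by
    unfold Delta
    abel
  rw [hsplit]
  exact PosDef.posSemidef_add (hsum.smul (inv_nonneg.mpr (Nat.cast_nonneg n)))
    hL.inv_sub_inv_one_add

/-- Inductive step of Proposition 1: if L is Hermitian positive definite then so is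
L⁻¹ + Δ(L). -/
theorem inv_add_delta_posDef {N n : ℕ} (hN : 0 < N) (hn : 0 < n)
    {k : Fin n → ℕ} (hk1 : ∀ i, 1 ≤ k i) (hkN : ∀ i, k i ≤ N)
    (U : (i : Fin n) → Matrix (Fin N) (Fin (k i)) ℂ)
    (hU : ∀ i, (U i)ᴴ * U i = 1)
    (L : Matrix (Fin N) (Fin N) ℂ) (hL : L.PosDef) :
    (L⁻¹ + Delta U L).PosDef :=
  inv_add_delta_posDef_general U hU L hL
end

section
/- (Proposition 1.) Let L₀ be an N×N Hermitian positive definite complex matrix, and define a sequence of matrices by L_{k+1} = (L_k⁻¹ + Δ(L_k))⁻¹ for k = 0,1,2,…. Then every L_k (k ≥ 0) is Hermitian positive definite (in particular all inverses in the recursion exist). -/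
open Matrix
open scoped ComplexOrder

/-!
Since `L⁻¹ - (I + L)⁻¹ = (L + L²)⁻¹` is positive definite, `L⁻¹ + Δ(L)` is a positive definite
matrix plus the nonnegative combination `(1/n) ∑ᵢ Uᵢ (Uᵢ* L Uᵢ)⁻¹ Uᵢ*` of positive semidefinite
matrices, hence positive definite; so is its inverse, and induction on the iteration finishes.
-/

namespace Matrix

variable {m n 𝕜 : Type*} [Fintype m] [Fintype n] [RCLike 𝕜]

theorem mulVec_injective_of_mul_eq_one {R : Type*} [CommSemiring R] [DecidableEq n]
    {A : Matrix n m R} {B : Matrix m n R} (h : A * B = 1) : Function.Injective B.mulVec :=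
  Function.LeftInverse.injective (g := A.mulVec) fun x => by
    rw [mulVec_mulVec, h, one_mulVec]

theorem PosDef.inv_sub_inv_one_add_s1 [DecidableEq n] {L : Matrix n n 𝕜} (hL : L.PosDef) :
    (L⁻¹ - (1 + L)⁻¹).PosDef := by
  have h1L : (1 + L).PosDef := PosDef.one.add hL
  have hprod : ((1 + L) * L).PosDef := by
    rw [add_mul, one_mul]
    nth_rewrite 2 [← hL.1.eq]
    exact hL.add_posSemidef (posSemidef_conjTranspose_mul_self L)
  rw [inv_sub_inv (iff_of_true hL.isUnit h1L.isUnit), add_sub_cancel_right, mul_one,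
    ← mul_inv_rev]
  exact hprod.inv

theorem PosDef.posSemidef_mul_inv_conjTranspose_mul_mul_mul_conjTranspose [DecidableEq m]
    {L : Matrix n n 𝕜} (hL : L.PosDef) {U : Matrix n m 𝕜} (hU : Function.Injective U.mulVec) :
    (U * (Uᴴ * L * U)⁻¹ * Uᴴ).PosSemidef :=
  (hL.conjTranspose_mul_mul_same hU).inv.posSemidef.mul_mul_conjTranspose_same U

end Matrix

theorem posDef_inv_add_Delta {N n : ℕ} {k : Fin n → ℕ}
    {U : (i : Fin n) → Matrix (Fin N) (Fin (k i)) ℂ} (hU : ∀ i, (U i)ᴴ * U i = 1)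
    {L : Matrix (Fin N) (Fin N) ℂ} (hL : L.PosDef) : (L⁻¹ + Delta U L).PosDef := by
  have hsum : ((n : ℂ)⁻¹ • ∑ i, U i * ((U i)ᴴ * L * U i)⁻¹ * (U i)ᴴ).PosSemidef :=
    (posSemidef_sum _ fun i _ => hL.posSemidef_mul_inv_conjTranspose_mul_mul_mul_conjTranspose
      (mulVec_injective_of_mul_eq_one (hU i))).smul (by positivity)
  rw [Delta, add_sub_left_comm]
  exact PosDef.posSemidef_add hsum hL.inv_sub_inv_one_add_s1

theorem picard_inverse_iterates_posDef_general {N n : ℕ}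
    {k : Fin n → ℕ}
    (U : (i : Fin n) → Matrix (Fin N) (Fin (k i)) ℂ)
    (hU : ∀ i, (U i)ᴴ * U i = 1)
    (L : ℕ → Matrix (Fin N) (Fin N) ℂ)
    (hL0 : (L 0).PosDef)
    (hrec : ∀ m : ℕ, L (m + 1) = ((L m)⁻¹ + Delta U (L m))⁻¹) :
    ∀ m : ℕ, (L m).PosDef := by
  intro m
  induction m with
  | zero => exact hL0
  | succ m ih => exact hrec m ▸ (posDef_inv_add_Delta hU ih).inv

/-- Proposition 1: the iterates L_{k+1} = (L_k⁻¹ + Δ(L_k))⁻¹ started from a Hermitian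
positive definite L₀ are all Hermitian positive definite. -/
theorem picard_inverse_iterates_posDef {N n : ℕ} (hN : 0 < N) (hn : 0 < n)
    {k : Fin n → ℕ} (hk1 : ∀ i, 1 ≤ k i) (hkN : ∀ i, k i ≤ N)
    (U : (i : Fin n) → Matrix (Fin N) (Fin (k i)) ℂ)
    (hU : ∀ i, (U i)ᴴ * U i = 1)
    (L : ℕ → Matrix (Fin N) (Fin N) ℂ)
    (hL0 : (L 0).PosDef)
    (hrec : ∀ m : ℕ, L (m + 1) = ((L m)⁻¹ + Delta U (L m))⁻¹) :
    ∀ m : ℕ, (L m).PosDef :=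
  picard_inverse_iterates_posDef_general U hU L hL0 hrec
end

section
/- Let L₀ be an N×N Hermitian positive definite complex matrix, and define a sequence of matrices by the Picard iteration L_{k+1} = L_k + L_k Δ(L_k) L_k for k = 0,1,2,…. Then every L_k (k ≥ 0) is Hermitian positive definite. -/
open Matrix
open scoped ComplexOrder

/-!
Write Δ(L) = S − (I+L)⁻¹ with S = (1/n)∑ᵢ Uᵢ(Uᵢ*LUᵢ)⁻¹Uᵢ* positive semidefinite. Since
L − L(I+L)⁻¹L = L(I+L)⁻¹ = (L⁻¹ + I)⁻¹, one step of the iteration is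

  L + LΔ(L)L = LSL + (L⁻¹ + I)⁻¹,

a positive semidefinite matrix plus a positive definite one.
-/

namespace Matrix

variable {n 𝕜 : Type*} [Fintype n] [RCLike 𝕜]

theorem PosDef.conjTranspose_mul_mul_of_conjTranspose_mul_self_eq_one_s2 {m : Type*} [Fintype m]
    [DecidableEq m] {L : Matrix n n 𝕜} (hL : L.PosDef) {U : Matrix n m 𝕜} (hU : Uᴴ * U = 1) :
    (Uᴴ * L * U).PosDef :=
  hL.conjTranspose_mul_mul_same fun x y hxy => by
    simpa [mulVec_mulVec, hU] using congrArg (Uᴴ *ᵥ ·) hxy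

theorem posSemidef_sum_mul_inv_conjTranspose_mul_mul_mul_conjTranspose {ι : Type*} [Fintype ι]
    {k : ι → Type*} [∀ i, Fintype (k i)] [∀ i, DecidableEq (k i)]
    {U : (i : ι) → Matrix n (k i) 𝕜} (hU : ∀ i, (U i)ᴴ * U i = 1)
    {L : Matrix n n 𝕜} (hL : L.PosDef) :
    (∑ i, U i * ((U i)ᴴ * L * U i)⁻¹ * (U i)ᴴ).PosSemidef :=
  posSemidef_sum _ fun i _ =>
    (hL.conjTranspose_mul_mul_of_conjTranspose_mul_self_eq_one_s2 (hU i)).inv.posSemidef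
      |>.mul_mul_conjTranspose_same (U i)

variable [DecidableEq n]

theorem PosDef.mul_inv_one_add {L : Matrix n n 𝕜} (hL : L.PosDef) : (L * (1 + L)⁻¹).PosDef := by
  have hdet : IsUnit L.det := (isUnit_iff_isUnit_det L).1 hL.isUnit
  have : L * (1 + L)⁻¹ = ((1 + L) * L⁻¹)⁻¹ := by
    rw [mul_inv_rev, nonsing_inv_nonsing_inv L hdet]
  rw [this, add_mul, one_mul, mul_nonsing_inv L hdet]
  exact (hL.inv.add PosDef.one).inv

theorem sub_mul_inv_one_add_mul {L : Matrix n n 𝕜} (h : IsUnit (1 + L)) :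
    L - L * (1 + L)⁻¹ * L = L * (1 + L)⁻¹ := by
  rw [sub_eq_iff_eq_add, ← mul_one_add, mul_assoc,
    nonsing_inv_mul _ ((isUnit_iff_isUnit_det _).1 h), mul_one]

end Matrix

theorem posSemidef_delta_add_inv_one_add {N n : ℕ} {k : Fin n → ℕ}
    {U : (i : Fin n) → Matrix (Fin N) (Fin (k i)) ℂ} (hU : ∀ i, (U i)ᴴ * U i = 1)
    {L : Matrix (Fin N) (Fin N) ℂ} (hL : L.PosDef) : (Delta U L + (1 + L)⁻¹).PosSemidef := by
  rw [Delta, sub_add_cancel]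
  exact (posSemidef_sum_mul_inv_conjTranspose_mul_mul_mul_conjTranspose hU hL).smul
    (by positivity)

theorem Matrix.PosDef.add_mul_delta_mul {N n : ℕ} {k : Fin n → ℕ}
    {U : (i : Fin n) → Matrix (Fin N) (Fin (k i)) ℂ} (hU : ∀ i, (U i)ᴴ * U i = 1)
    {L : Matrix (Fin N) (Fin N) ℂ} (hL : L.PosDef) : (L + L * Delta U L * L).PosDef := by
  have hstep : L + L * Delta U L * L = Lᴴ * (Delta U L + (1 + L)⁻¹) * L + L * (1 + L)⁻¹ := by
    rw [← sub_mul_inv_one_add_mul (PosDef.one.add hL).isUnit, hL.isHermitian.eq]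
    noncomm_ring
  rw [hstep]
  exact PosDef.posSemidef_add
    ((posSemidef_delta_add_inv_one_add hU hL).conjTranspose_mul_mul_same L) hL.mul_inv_one_add

theorem picard_iterates_posDef_general {N n : ℕ}
    {k : Fin n → ℕ}
    (U : (i : Fin n) → Matrix (Fin N) (Fin (k i)) ℂ)
    (hU : ∀ i, (U i)ᴴ * U i = 1)
    (L : ℕ → Matrix (Fin N) (Fin N) ℂ)
    (hL0 : (L 0).PosDef)
    (hrec : ∀ m : ℕ, L (m + 1) = L m + L m * Delta U (L m) * L m) :
    ∀ m : ℕ, (L m).PosDef := by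
  intro m
  induction m with
  | zero => exact hL0
  | succ m ih => exact hrec m ▸ ih.add_mul_delta_mul hU

/-- The Picard iterates L_{k+1} = L_k + L_k Δ(L_k) L_k started from a Hermitian
positive definite L₀ are all Hermitian positive definite. -/
theorem picard_iterates_posDef {N n : ℕ} (hN : 0 < N) (hn : 0 < n)
    {k : Fin n → ℕ} (hk1 : ∀ i, 1 ≤ k i) (hkN : ∀ i, k i ≤ N)
    (U : (i : Fin n) → Matrix (Fin N) (Fin (k i)) ℂ)
    (hU : ∀ i, (U i)ᴴ * U i = 1)
    (L : ℕ → Matrix (Fin N) (Fin N) ℂ)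
    (hL0 : (L 0).PosDef)
    (hrec : ∀ m : ℕ, L (m + 1) = L m + L m * Delta U (L m) * L m) :
    ∀ m : ℕ, (L m).PosDef :=
  picard_iterates_posDef_general U hU L hL0 hrec
end

section
/- (Lemma 1.) Let N ≥ k ≥ 1 and let U be an N×k complex matrix with U*U = I. Then the real-valued map g(S) = log det(U* S⁻¹ U) is convex on the (convex) set of N×N Hermitian positive definite complex matrices; that is, for all Hermitian positive definite S, T and all t ∈ [0,1], log det(U* (tS + (1−t)T)⁻¹ U) ≤ t·log det(U* S⁻¹ U) + (1−t)·log det(U* T⁻¹ U). (Here U*S⁻¹U is Hermitian positive definite, so its determinant is a positive real.) -/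
/-!
Under the constraint `Uᴴ X = 1` the quadratic form `Xᴴ S X` is minimised, in the Loewner order,
at `X = S⁻¹ U (Uᴴ S⁻¹ U)⁻¹`, with minimum `(Uᴴ S⁻¹ U)⁻¹`. Being a minimum of maps that are linear
in `S`, `S ↦ (Uᴴ S⁻¹ U)⁻¹` is Loewner-concave. Since `log det` is monotone and concave on positive
definite matrices (diagonalise the pair simultaneously and use concavity of `Real.log`), the map
`S ↦ log det (Uᴴ S⁻¹ U) = -log det (Uᴴ S⁻¹ U)⁻¹` is convex.
-/

open Matrix
open scoped ComplexOrder MatrixOrder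

namespace Matrix

variable {𝕜 : Type*} [RCLike 𝕜] {m n : Type*}

lemma convex_setOf_posDef : Convex ℝ {A : Matrix n n 𝕜 | A.PosDef} := by
  intro A hA B hB a b ha hb hab
  rcases ha.eq_or_lt with rfl | ha
  · simpa [show b = 1 by linarith] using hB
  · exact (hA.smul ha).add_posSemidef (hB.posSemidef.smul hb)

variable [Fintype m] [Fintype n] [DecidableEq m] [DecidableEq n]

/-- Meaningful for positive definite `A`, whose determinant is real and positive. -/
noncomputable def logDet (A : Matrix n n 𝕜) : ℝ := Real.log (RCLike.re A.det)

lemma IsHermitian.ofReal_re_det {A : Matrix n n 𝕜} (hA : A.IsHermitian) :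
    ((RCLike.re A.det : ℝ) : 𝕜) = A.det := by
  rw [hA.det_eq_prod_eigenvalues, ← RCLike.ofReal_prod, RCLike.ofReal_re]

lemma IsHermitian.logDet_inv {A : Matrix n n 𝕜} (hA : A.IsHermitian) :
    logDet A⁻¹ = -logDet A := by
  rw [logDet, logDet, det_nonsing_inv, Ring.inverse_eq_inv', ← hA.ofReal_re_det,
    ← RCLike.ofReal_inv, RCLike.ofReal_re, RCLike.ofReal_re, Real.log_inv]

lemma PosDef.re_det_pos {A : Matrix n n 𝕜} (hA : A.PosDef) : 0 < RCLike.re A.det :=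
  (RCLike.pos_iff.mp hA.det_pos).1

lemma IsHermitian.det_smul_one_add_smul {D : Matrix n n 𝕜} (hD : D.IsHermitian) (s r : ℝ) :
    (s • (1 : Matrix n n 𝕜) + r • D).det = ∏ i, ((s + r * hD.eigenvalues i : ℝ) : 𝕜) := by
  have hcfc : s • (1 : Matrix n n 𝕜) + r • D = cfc (fun x => s + r * x) D := by
    rw [cfc_add .., cfc_const_mul .., cfc_id' .., cfc_const .., Algebra.algebraMap_eq_smul_one]
  rw [hcfc, hD.cfc_eq]
  simp [IsHermitian.cfc, -Unitary.conjStarAlgAut_apply]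

/-- The `μ i` are the eigenvalues of `A^{-1/2} B A^{-1/2}`: conjugating by `A^{1/2}` diagonalises
`A` and `B` simultaneously. -/
lemma PosDef.exists_re_det_smul_add_smul {A B : Matrix n n 𝕜} (hA : A.PosDef)
    (hB : B.PosSemidef) :
    ∃ μ : n → ℝ, (∀ i, 0 ≤ μ i) ∧
      ∀ s r : ℝ, RCLike.re (s • A + r • B).det = RCLike.re A.det * ∏ i, (s + r * μ i) := by
  set C := CFC.sqrt A
  have hC : C.PosDef := hA.isStrictlyPositive.sqrt.posDef
  have hCC : C * C = A := CFC.sqrt_mul_sqrt_self A hA.posSemidef.nonneg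
  have hCu : IsUnit C.det := hC.isUnit.map detMonoidHom
  have hD : (C⁻¹ * B * C⁻¹).PosSemidef := by
    simpa [hC.1.inv.eq] using hB.conjTranspose_mul_mul_same C⁻¹
  refine ⟨hD.1.eigenvalues, hD.eigenvalues_nonneg, fun s r => ?_⟩
  have hBC : C * (C⁻¹ * B * C⁻¹) * C = B := by
    simp only [Matrix.mul_assoc, mul_nonsing_inv_cancel_left _ _ hCu, nonsing_inv_mul _ hCu,
      Matrix.mul_one]
  have hconj : s • A + r • B = C * (s • 1 + r • (C⁻¹ * B * C⁻¹)) * C := by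
    rw [Matrix.mul_add, Matrix.add_mul, Matrix.mul_smul, Matrix.smul_mul, Matrix.mul_one, hCC,
      Matrix.mul_smul, Matrix.smul_mul, hBC]
  rw [hconj, det_mul, det_mul, hD.1.det_smul_one_add_smul, ← hCC, det_mul, mul_right_comm,
    ← RCLike.ofReal_prod, RCLike.re_mul_ofReal]

lemma PosDef.logDet_le_logDet {A B : Matrix n n 𝕜} (hA : A.PosDef) (hAB : A ≤ B) :
    logDet A ≤ logDet B := by
  obtain ⟨μ, hμ, hdet⟩ := hA.exists_re_det_smul_add_smul (le_iff.mp hAB)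
  have hB : B = (1 : ℝ) • A + (1 : ℝ) • (B - A) := by simp
  rw [logDet, logDet, hB, hdet]
  refine Real.log_le_log hA.re_det_pos ((le_mul_iff_one_le_right hA.re_det_pos).2 ?_)
  exact Finset.one_le_prod fun i _ => by linarith [hμ i]

lemma concaveOn_logDet : ConcaveOn ℝ {A : Matrix n n 𝕜 | A.PosDef} logDet := by
  refine ⟨convex_setOf_posDef, fun A hA B hB a b ha hb hab => ?_⟩
  obtain ⟨μ, hμ, hdet⟩ := PosDef.exists_re_det_smul_add_smul hA hB.posSemidef
  have hdetB : RCLike.re B.det = RCLike.re A.det * ∏ i, μ i := by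
    simpa using hdet 0 1
  have hprod : 0 < ∏ i, μ i :=
    pos_of_mul_pos_right (hdetB ▸ PosDef.re_det_pos hB) hA.re_det_pos.le
  have hμpos : ∀ i, 0 < μ i := fun i =>
    (hμ i).lt_of_ne (Finset.prod_ne_zero_iff.mp hprod.ne' i (Finset.mem_univ i)).symm
  have hpos : ∀ i, 0 < a + b * μ i := fun i => by
    simpa using convex_Ioi (0 : ℝ) (Set.mem_Ioi.2 one_pos) (Set.mem_Ioi.2 (hμpos i)) ha hb hab
  have hlog : ∀ i, b * Real.log (μ i) ≤ Real.log (a + b * μ i) := fun i => by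
    simpa using strictConcaveOn_log_Ioi.concaveOn.2 (Set.mem_Ioi.2 one_pos)
      (Set.mem_Ioi.2 (hμpos i)) ha hb hab
  simp only [logDet, smul_eq_mul, hdet, hdetB]
  rw [Real.log_mul hA.re_det_pos.ne' (Finset.prod_pos fun i _ => hpos i).ne',
    Real.log_mul hA.re_det_pos.ne' hprod.ne',
    Real.log_prod fun i _ => (hpos i).ne', Real.log_prod fun i _ => (hμpos i).ne',
    mul_add, Finset.mul_sum]
  have hsum := Finset.sum_le_sum fun i (_ : i ∈ Finset.univ) => hlog i
  have hsplit : a * Real.log (RCLike.re A.det) + b * Real.log (RCLike.re A.det) =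
      Real.log (RCLike.re A.det) := by rw [← add_mul, hab, one_mul]
  linarith

lemma PosDef.isLeast_conjTranspose_mul_mul {S : Matrix n n 𝕜} (hS : S.PosDef)
    {U : Matrix n m 𝕜} (hA : IsUnit (Uᴴ * S⁻¹ * U)) :
    IsLeast {P | ∃ X : Matrix n m 𝕜, Uᴴ * X = 1 ∧ Xᴴ * S * X = P} (Uᴴ * S⁻¹ * U)⁻¹ := by
  set A := Uᴴ * S⁻¹ * U
  have hAH : A⁻¹ᴴ = A⁻¹ := (isHermitian_conjTranspose_mul_mul U hS.1.inv).inv.eq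
  have hUSU : ∀ Z : Matrix m m 𝕜, Uᴴ * (S⁻¹ * (U * Z)) = A * Z := fun Z => by
    simp only [A, Matrix.mul_assoc]
  have hSu : IsUnit S.det := hS.isUnit.map detMonoidHom
  have hAu : IsUnit A.det := hA.map detMonoidHom
  refine ⟨⟨S⁻¹ * U * A⁻¹, ?_, ?_⟩, ?_⟩
  · rw [← Matrix.mul_assoc, ← Matrix.mul_assoc, mul_nonsing_inv _ hAu]
  · simp only [conjTranspose_mul, hAH, hS.1.inv.eq, Matrix.mul_assoc,
      nonsing_inv_mul_cancel_left _ _ hSu, hUSU, nonsing_inv_mul_cancel_left _ _ hAu]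
  rintro _ ⟨X, hX, rfl⟩
  have hXU : ∀ Z : Matrix m m 𝕜, Xᴴ * (U * Z) = Z := fun Z => by
    rw [← Matrix.mul_assoc, ← conjTranspose_conjTranspose U, ← conjTranspose_mul, hX,
      conjTranspose_one, Matrix.one_mul]
  -- completing the square around the minimiser `S⁻¹ U A⁻¹`
  have hY : (X - S⁻¹ * U * A⁻¹)ᴴ * S * (X - S⁻¹ * U * A⁻¹) = Xᴴ * S * X - A⁻¹ := by
    simp only [conjTranspose_sub, conjTranspose_mul, hAH, hS.1.inv.eq, Matrix.sub_mul,
      Matrix.mul_sub, Matrix.mul_assoc, mul_nonsing_inv_cancel_left _ _ hSu,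
      nonsing_inv_mul_cancel_left _ _ hSu, hX, hXU, hUSU, mul_nonsing_inv _ hAu, Matrix.mul_one]
    abel
  rw [le_iff, ← hY]
  exact hS.posSemidef.conjTranspose_mul_mul_same _

lemma concaveOn_inv_conjTranspose_mul_inv_mul {U : Matrix n m 𝕜}
    (hU : Function.Injective U.mulVec) :
    ConcaveOn ℝ {S : Matrix n n 𝕜 | S.PosDef} fun S => (Uᴴ * S⁻¹ * U)⁻¹ := by
  refine ⟨convex_setOf_posDef, fun S hS T hT a b ha hb hab => ?_⟩
  have hleast : ∀ {S : Matrix n n 𝕜}, S.PosDef →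
      IsLeast {P | ∃ X : Matrix n m 𝕜, Uᴴ * X = 1 ∧ Xᴴ * S * X = P} (Uᴴ * S⁻¹ * U)⁻¹ := fun hS =>
    hS.isLeast_conjTranspose_mul_mul (hS.inv.conjTranspose_mul_mul_same hU).isUnit
  obtain ⟨⟨X, hX, hXMX⟩, -⟩ := hleast (convex_setOf_posDef hS hT ha hb hab)
  have hXS := (hleast hS).2 ⟨X, hX, rfl⟩
  have hXT := (hleast hT).2 ⟨X, hX, rfl⟩
  dsimp only
  rw [← hXMX, Matrix.mul_add, Matrix.add_mul, Matrix.mul_smul, Matrix.smul_mul, Matrix.mul_smul,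
    Matrix.smul_mul]
  exact add_le_add (smul_le_smul_of_nonneg_left hXS ha) (smul_le_smul_of_nonneg_left hXT hb)

lemma convexOn_logDet_conjTranspose_mul_inv_mul {U : Matrix n m 𝕜}
    (hU : Function.Injective U.mulVec) :
    ConvexOn ℝ {S : Matrix n n 𝕜 | S.PosDef} fun S => logDet (Uᴴ * S⁻¹ * U) := by
  refine ⟨convex_setOf_posDef, fun S hS T hT a b ha hb hab => ?_⟩
  have hG : ∀ {S : Matrix n n 𝕜}, S.PosDef → (Uᴴ * S⁻¹ * U)⁻¹.PosDef := fun hS =>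
    (hS.inv.conjTranspose_mul_mul_same hU).inv
  have hlog : ∀ {S : Matrix n n 𝕜}, S.PosDef →
      logDet (Uᴴ * S⁻¹ * U) = -logDet (Uᴴ * S⁻¹ * U)⁻¹ := fun hS => by
    rw [(hS.inv.conjTranspose_mul_mul_same hU).1.logDet_inv, neg_neg]
  have hmono := PosDef.logDet_le_logDet (convex_setOf_posDef (hG hS) (hG hT) ha hb hab)
    ((concaveOn_inv_conjTranspose_mul_inv_mul hU).2 hS hT ha hb hab)
  have hconc := concaveOn_logDet.2 (hG hS) (hG hT) ha hb hab
  simp only [smul_eq_mul] at hmono hconc ⊢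
  rw [hlog hS, hlog hT, hlog (convex_setOf_posDef hS hT ha hb hab)]
  linarith

end Matrix

theorem logdet_compression_inv_convex_general {N k : ℕ}
    (U : Matrix (Fin N) (Fin k) ℂ) (hU : Uᴴ * U = 1)
    (S T : Matrix (Fin N) (Fin N) ℂ) (hS : S.PosDef) (hT : T.PosDef)
    (t : ℝ) (ht0 : 0 ≤ t) (ht1 : t ≤ 1) :
    Real.log ((Uᴴ * ((t : ℂ) • S + ((1 - t : ℝ) : ℂ) • T)⁻¹ * U).det.re) ≤
      t * Real.log ((Uᴴ * S⁻¹ * U).det.re) +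
        (1 - t) * Real.log ((Uᴴ * T⁻¹ * U).det.re) := by
  have hUinj : Function.Injective U.mulVec :=
    Function.LeftInverse.injective (g := Uᴴ.mulVec) fun x => by
      rw [mulVec_mulVec, hU, one_mulVec]
  rw [Complex.coe_smul, Complex.coe_smul]
  exact (convexOn_logDet_conjTranspose_mul_inv_mul hUinj).2 hS hT ht0 (sub_nonneg.2 ht1)
    (add_sub_cancel t 1)

/-- Lemma 1: for U with orthonormal columns (U*U = I), the map
g(S) = log det(U* S⁻¹ U) is convex on Hermitian positive definite matrices. -/
theorem logdet_compression_inv_convex {N k : ℕ} (hk1 : 1 ≤ k) (hkN : k ≤ N)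
    (U : Matrix (Fin N) (Fin k) ℂ) (hU : Uᴴ * U = 1)
    (S T : Matrix (Fin N) (Fin N) ℂ) (hS : S.PosDef) (hT : T.PosDef)
    (t : ℝ) (ht0 : 0 ≤ t) (ht1 : t ≤ 1) :
    Real.log ((Uᴴ * ((t : ℂ) • S + ((1 - t : ℝ) : ℂ) • T)⁻¹ * U).det.re) ≤
      t * Real.log ((Uᴴ * S⁻¹ * U).det.re) +
        (1 - t) * Real.log ((Uᴴ * T⁻¹ * U).det.re) :=
  logdet_compression_inv_convex_general U hU S T hS hT t ht0 ht1
end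

section
/- Let L be an N×N Hermitian positive definite complex matrix, let L^{1/2} denote its positive definite square root, and set Z(L) = (1/n)∑_{i=1}^n Uᵢ(Uᵢ*LUᵢ)⁻¹Uᵢ*. Then L^{1/2} Z(L) L^{1/2} ≼ I in the Loewner order; in particular, the smallest eigenvalue of the Hermitian matrix L^{1/2} Z(L) L^{1/2} is at most 1. -/
/-!
Write `S = L^{1/2}` and `Vᵢ = S Uᵢ`. Then `Uᵢ* L Uᵢ = Vᵢ* Vᵢ`, so `S Z(L) S` is the average of the
matrices `Vᵢ (Vᵢ* Vᵢ)⁻¹ Vᵢ*`. Each of them is an orthogonal projection (onto the range of `Vᵢ`),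
hence `≼ I`, and so is their average. An eigenvalue of a Hermitian matrix `A ≼ I` is the value
`v* A v ≤ v* v = 1` of the quadratic form at a unit eigenvector `v`.
-/

open Matrix
open scoped ComplexOrder

/-- The square root of a positive semidefinite matrix (as in the older Mathlib). -/
noncomputable def Matrix.PosSemidef.sqrt {n 𝕜 : Type*} [Fintype n] [DecidableEq n] [RCLike 𝕜]
    {A : Matrix n n 𝕜} (hA : A.PosSemidef) : Matrix n n 𝕜 :=
  hA.1.eigenvectorUnitary.1 * diagonal ((↑) ∘ (√·) ∘ hA.1.eigenvalues) *
  (star hA.1.eigenvectorUnitary : Matrix n n 𝕜)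

open scoped MatrixOrder

namespace Matrix

theorem nonsing_inv_mul_mul_nonsing_inv {n R : Type*} [Fintype n] [DecidableEq n] [CommRing R]
    (A : Matrix n n R) : A⁻¹ * A * A⁻¹ = A⁻¹ := by
  by_cases h : IsUnit A.det
  · rw [nonsing_inv_mul _ h, Matrix.one_mul]
  · rw [nonsing_inv_apply_not_isUnit _ h, Matrix.mul_zero]

variable {m n p 𝕜 : Type*} [RCLike 𝕜]

theorem PosSemidef.sqrt_eq_cfc_sqrt [Fintype n] [DecidableEq n] {A : Matrix n n 𝕜}
    (hA : A.PosSemidef) : hA.sqrt = CFC.sqrt A := by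
  rw [CFC.sqrt_eq_real_sqrt A (nonneg_iff_posSemidef.mpr hA), cfcₙ_eq_cfc, hA.1.cfc_eq]
  rfl

-- If `Vᴴ * V` is singular, its `⁻¹` is `0`, and then so is `V * (Vᴴ * V)⁻¹ * Vᴴ`.
theorem isStarProjection_mul_inv_mul_conjTranspose [Fintype m] [Fintype p] [DecidableEq p]
    (V : Matrix m p 𝕜) : IsStarProjection (V * (Vᴴ * V)⁻¹ * Vᴴ) where
  isIdempotentElem :=
    calc V * (Vᴴ * V)⁻¹ * Vᴴ * (V * (Vᴴ * V)⁻¹ * Vᴴ)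
        = V * ((Vᴴ * V)⁻¹ * (Vᴴ * V) * (Vᴴ * V)⁻¹) * Vᴴ := by simp only [Matrix.mul_assoc]
      _ = V * (Vᴴ * V)⁻¹ * Vᴴ := by rw [nonsing_inv_mul_mul_nonsing_inv]
  isSelfAdjoint := by
    simp [IsSelfAdjoint, star_eq_conjTranspose, conjTranspose_nonsing_inv, Matrix.mul_assoc]

theorem IsHermitian.mul_mul_inv_mul_conjTranspose_mul_le_one [Fintype n] [DecidableEq n]
    [Fintype p] [DecidableEq p] {S L : Matrix n n 𝕜} (hS : S.IsHermitian) (hSL : S * S = L)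
    (U : Matrix n p 𝕜) : S * (U * (Uᴴ * L * U)⁻¹ * Uᴴ) * S ≤ 1 := by
  subst hSL
  have hV : S * (U * (Uᴴ * (S * S) * U)⁻¹ * Uᴴ) * S
      = S * U * ((S * U)ᴴ * (S * U))⁻¹ * (S * U)ᴴ := by
    simp only [conjTranspose_mul, hS.eq, Matrix.mul_assoc]
  rw [hV]
  exact (isStarProjection_mul_inv_mul_conjTranspose _).le_one

theorem inv_card_smul_sum_le_one [DecidableEq n] {ι : Type*} [Fintype ι] [Nonempty ι]
    {A : ι → Matrix n n 𝕜} (h : ∀ i, A i ≤ 1) : (Fintype.card ι : 𝕜)⁻¹ • ∑ i, A i ≤ 1 := by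
  have hcard : (Fintype.card ι : 𝕜) ≠ 0 := Nat.cast_ne_zero.mpr Fintype.card_ne_zero
  have hsub : 1 - (Fintype.card ι : 𝕜)⁻¹ • ∑ i, A i
      = (Fintype.card ι : 𝕜)⁻¹ • ∑ i, (1 - A i) := by
    rw [Finset.sum_sub_distrib, smul_sub, Finset.sum_const, Finset.card_univ,
      ← Nat.cast_smul_eq_nsmul 𝕜, smul_smul, inv_mul_cancel₀ hcard, one_smul]
  rw [le_iff, hsub]
  exact (posSemidef_sum _ fun i _ => le_iff.mp (h i)).smul (by positivity)

theorem IsHermitian.eigenvalues_le_one [Fintype n] [DecidableEq n] {A : Matrix n n 𝕜}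
    (hA : A.IsHermitian) (h : A ≤ 1) (j : n) : hA.eigenvalues j ≤ 1 := by
  have hform := (le_iff.mp h).re_dotProduct_nonneg (hA.eigenvectorBasis j)
  rw [sub_mulVec, dotProduct_sub, one_mulVec, map_sub, ← hA.eigenvalues_eq] at hform
  have hunit : RCLike.re (star ⇑(hA.eigenvectorBasis j) ⬝ᵥ ⇑(hA.eigenvectorBasis j)) = 1 := by
    rw [dotProduct_comm, ← EuclideanSpace.inner_eq_star_dotProduct, inner_self_eq_norm_sq,
      hA.eigenvectorBasis.orthonormal.1 j, one_pow]
  linarith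

end Matrix

theorem sqrt_Z_sqrt_le_one_general {N n : ℕ} (hN : 0 < N) (hn : 0 < n)
    {k : Fin n → ℕ}
    (U : (i : Fin n) → Matrix (Fin N) (Fin (k i)) ℂ)
    (L : Matrix (Fin N) (Fin N) ℂ) (hL : L.PosDef) :
    (1 - hL.posSemidef.sqrt *
        ((n : ℂ)⁻¹ • (∑ i, U i * ((U i)ᴴ * L * U i)⁻¹ * (U i)ᴴ)) *
        hL.posSemidef.sqrt).PosSemidef ∧
      ∀ h : (hL.posSemidef.sqrt *
          ((n : ℂ)⁻¹ • (∑ i, U i * ((U i)ᴴ * L * U i)⁻¹ * (U i)ᴴ)) *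
          hL.posSemidef.sqrt).IsHermitian,
        (⨅ j, h.eigenvalues j) ≤ 1 := by
  have : Nonempty (Fin n) := ⟨⟨0, hn⟩⟩
  have hL0 : 0 ≤ L := nonneg_iff_posSemidef.mpr hL.posSemidef
  have hproj (i : Fin n) :
      CFC.sqrt L * (U i * ((U i)ᴴ * L * U i)⁻¹ * (U i)ᴴ) * CFC.sqrt L ≤ 1 :=
    IsHermitian.mul_mul_inv_mul_conjTranspose_mul_le_one (CFC.sqrt_nonneg L).isSelfAdjoint
      (CFC.sqrt_mul_sqrt_self L hL0) (U i)
  have hZ : hL.posSemidef.sqrt * ((n : ℂ)⁻¹ • (∑ i, U i * ((U i)ᴴ * L * U i)⁻¹ * (U i)ᴴ)) *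
      hL.posSemidef.sqrt ≤ 1 := by
    rw [hL.posSemidef.sqrt_eq_cfc_sqrt, mul_smul_comm, smul_mul_assoc, Finset.mul_sum,
      Finset.sum_mul]
    simpa only [Fintype.card_fin] using inv_card_smul_sum_le_one hproj
  exact ⟨le_iff.mp hZ, fun h =>
    (ciInf_le (Set.finite_range _).bddBelow ⟨0, hN⟩).trans (h.eigenvalues_le_one hZ _)⟩

/-- With Z(L) = (1/n)∑ᵢ Uᵢ(Uᵢ*LUᵢ)⁻¹Uᵢ*, one has L^{1/2} Z(L) L^{1/2} ≼ I; in
particular the smallest eigenvalue of the Hermitian matrix L^{1/2} Z(L) L^{1/2} is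
at most 1. -/
theorem sqrt_Z_sqrt_le_one {N n : ℕ} (hN : 0 < N) (hn : 0 < n)
    {k : Fin n → ℕ} (hk1 : ∀ i, 1 ≤ k i) (hkN : ∀ i, k i ≤ N)
    (U : (i : Fin n) → Matrix (Fin N) (Fin (k i)) ℂ)
    (hU : ∀ i, (U i)ᴴ * U i = 1)
    (L : Matrix (Fin N) (Fin N) ℂ) (hL : L.PosDef) :
    (1 - hL.posSemidef.sqrt *
        ((n : ℂ)⁻¹ • (∑ i, U i * ((U i)ᴴ * L * U i)⁻¹ * (U i)ᴴ)) *
        hL.posSemidef.sqrt).PosSemidef ∧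
      ∀ h : (hL.posSemidef.sqrt *
          ((n : ℂ)⁻¹ • (∑ i, U i * ((U i)ᴴ * L * U i)⁻¹ * (U i)ᴴ)) *
          hL.posSemidef.sqrt).IsHermitian,
        (⨅ j, h.eigenvalues j) ≤ 1 :=
  sqrt_Z_sqrt_le_one_general hN hn U L hL
end

section
/- Let L be an N×N Hermitian positive semidefinite complex matrix, set K = L(L+I)⁻¹ (the marginal kernel), and for Y ⊆ {1,…,N} let I_{Y^c} denote the diagonal 0/1 matrix whose (j,j) entry is 1 if j ∉ Y and 0 if j ∈ Y. Then for every Y ⊆ {1,…,N}, det(L_Y)/det(L+I) = |det(K − I_{Y^c})|, where L_Y is the principal submatrix of L with rows and columns indexed by Y (det(L_∅) = 1 by convention). -/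
/-!
Multiplying `K - I_{Yᶜ}` on the right by `L + I` gives `L - I_{Yᶜ}(L + I)`, whose rows indexed
by `Y` are those of `L` and whose other rows are those of `-I`. This matrix is block triangular
with diagonal blocks `L_Y` and `-I`, so `det(K - I_{Yᶜ}) det(L + I) = ± det L_Y`; taking moduli
and using `det L_Y ≥ 0`, `det(L + I) > 0` gives the claim.
-/

open Matrix Finset
open scoped ComplexOrder

namespace Matrix

variable {n R : Type*} [Fintype n] [DecidableEq n] [CommRing R] (L : Matrix n n R)
  (Y : Finset n)

theorem sub_diagonal_indicator_mul_add_one_apply (i j : n) :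
    (L - diagonal (fun j => if j ∈ Y then 0 else 1) * (L + 1) : Matrix n n R) i j =
      if i ∈ Y then L i j else (-1 : Matrix n n R) i j := by
  by_cases hi : i ∈ Y <;> simp [hi, diagonal_mul]

theorem det_sub_diagonal_indicator_mul_add_one :
    (L - diagonal (fun j => if j ∈ Y then 0 else 1) * (L + 1)).det =
      (L.submatrix (fun i : Y => (i : n)) (fun j : Y => (j : n))).det * (-1) ^ #Yᶜ := by
  set M : Matrix n n R := L - diagonal (fun j => if j ∈ Y then 0 else 1) * (L + 1)
  have hM : ∀ i j, M i j = if i ∈ Y then L i j else (-1 : Matrix n n R) i j :=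
    sub_diagonal_indicator_mul_add_one_apply L Y
  have hlower : ∀ i, i ∉ Y → ∀ j, j ∈ Y → M i j = 0 := fun i hi j hj => by
    rw [hM, if_neg hi, neg_apply, one_apply_ne (by rintro rfl; exact hi hj), neg_zero]
  have hY : M.toSquareBlockProp (· ∈ Y) = L.submatrix (↑) (↑) := by
    ext i j
    simp [toSquareBlockProp, hM, i.2]
  have hYc : M.toSquareBlockProp (· ∉ Y) = -1 := by
    ext i j
    simp [toSquareBlockProp, hM, i.2, one_apply, Subtype.ext_iff]
  rw [twoBlockTriangular_det M (· ∈ Y) hlower, hY, hYc, det_neg, det_one, mul_one,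
    Fintype.card_subtype_compl, Fintype.card_coe, card_compl]
  -- the two sides differ only in the `Fintype` instance on `Y`
  convert rfl using 3

theorem det_mul_inv_add_one_sub_diagonal_indicator_mul_det (hL : IsUnit (L + 1).det) :
    (L * (L + 1)⁻¹ - diagonal (fun j => if j ∈ Y then 0 else 1)).det * (L + 1).det =
      (L.submatrix (fun i : Y => (i : n)) (fun j : Y => (j : n))).det * (-1) ^ #Yᶜ := by
  rw [← det_mul, sub_mul, mul_assoc, nonsing_inv_mul _ hL, mul_one,
    det_sub_diagonal_indicator_mul_add_one]

end Matrix

/-- For a Hermitian positive semidefinite L, with marginal kernel K = L(L+I)⁻¹ and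
I_{Y^c} the diagonal 0/1 matrix supported off Y, the DPP probability satisfies
det(L_Y)/det(L+I) = |det(K − I_{Y^c})| for every subset Y. -/
theorem dpp_prob_eq_abs_det_marginal {N : ℕ}
    (L : Matrix (Fin N) (Fin N) ℂ) (hL : L.PosSemidef) (Y : Finset (Fin N)) :
    (L.submatrix (fun i : Y => (i : Fin N)) (fun j : Y => (j : Fin N))).det /
        (L + 1).det =
      (‖(L * (L + 1)⁻¹ -
          Matrix.diagonal (fun j => if j ∈ Y then 0 else 1)).det‖ : ℂ) := by
  have hpos : 0 < (L + 1).det := (PosDef.posSemidef_add hL PosDef.one).det_pos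
  have hnonneg : 0 ≤ (L.submatrix (fun i : Y => (i : Fin N)) (fun j : Y => (j : Fin N))).det :=
    (hL.submatrix _).det_nonneg
  have hnorm :=
    congrArg norm (det_mul_inv_add_one_sub_diagonal_indicator_mul_det L Y hpos.ne'.isUnit)
  rw [norm_mul, norm_mul, norm_pow, norm_neg, norm_one, one_pow, mul_one,
    ← eq_div_iff (norm_ne_zero_iff.mpr hpos.ne')] at hnorm
  rw [hnorm, Complex.ofReal_div, ← Complex.eq_coe_norm_of_nonneg hpos.le,
    ← Complex.eq_coe_norm_of_nonneg hnonneg]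
end
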